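/- arXiv:1801.03308 — 4 statements merged into one kernel-verified Lean document; each statement's English description precedes it below -/
import Mathlib

section
/- Every countably infinite group G admits a minimal free subshift: there exists a nonempty closed shift-invariant subset X ⊆ {0,1}^G such that every G-orbit in X is dense in X and g·x ≠ x for every x ∈ X and every g ≠ e. -/
/-- The (left) shift action of `G` on `{0,1}^G = G → Bool`: `(g·ω)(h) = ω(g⁻¹h)`. -/
def shiftB {G : Type*} [Group G] (g : G) (ω : G → Bool) : G → Bool :=
  fun h => ω (g⁻¹ * h)

open Finset
set_option maxHeartbeats 1000000
set_option linter.unusedSectionVars false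
attribute [local instance] Classical.propDecidable

namespace MFS


variable {β : Type*} [Fintype β] [DecidableEq β]

/-- `A` is determined by the coordinates in `u`. -/
def DetBy (A : Finset (β → Bool)) (u : Finset β) : Prop :=
  ∀ ω ω' : β → Bool, (∀ v ∈ u, ω v = ω' v) → (ω ∈ A → ω' ∈ A)

lemma DetBy.iff {A : Finset (β → Bool)} {u : Finset β} (h : DetBy A u)
    {ω ω' : β → Bool} (hag : ∀ v ∈ u, ω v = ω' v) : ω ∈ A ↔ ω' ∈ A :=
  ⟨h ω ω' hag, h ω' ω (fun v hv => (hag v hv).symm)⟩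

lemma DetBy.mono {A : Finset (β → Bool)} {u u' : Finset β} (h : DetBy A u) (hsub : u ⊆ u') :
    DetBy A u' := fun ω ω' hag => h ω ω' (fun v hv => hag v (hsub hv))

/-- Independence counting: if `A` is determined by `u` and `B` by `uᶜ`, then
`|A| * |B| = |A ∩ B| * 2^|β|`. -/
lemma prod_count (A B : Finset (β → Bool)) (u : Finset β)
    (hA : DetBy A u) (hB : DetBy B uᶜ) :
    A.card * B.card = (A ∩ B).card * 2 ^ (Fintype.card β) := by
  classical
  have key : (A ×ˢ B).card = ((A ∩ B) ×ˢ (univ : Finset (β → Bool))).card := by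
    refine Finset.card_bij'
      (i := fun p _ => ((fun v => if v ∈ u then p.1 v else p.2 v),
                        (fun v => if v ∈ u then p.2 v else p.1 v)))
      (j := fun p _ => ((fun v => if v ∈ u then p.1 v else p.2 v),
                        (fun v => if v ∈ u then p.2 v else p.1 v)))
      ?hi ?hj ?left ?right
    case hi =>
      rintro ⟨x, y⟩ hp
      simp only [mem_product] at hp ⊢
      refine ⟨mem_inter.mpr ⟨?_, ?_⟩, mem_univ _⟩
      · exact hA x _ (fun v hv => by simp [hv]) hp.1
      · exact hB y _ (fun v hv => by simp [mem_compl.mp hv]) hp.2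
    case hj =>
      rintro ⟨z, w⟩ hp
      simp only [mem_product, mem_inter] at hp ⊢
      constructor
      · exact hA z _ (fun v hv => by simp [hv]) hp.1.1
      · exact hB z _ (fun v hv => by simp [mem_compl.mp hv]) hp.1.2
    case left =>
      rintro ⟨x, y⟩ _
      refine Prod.ext ?_ ?_ <;> · funext v; by_cases hv : v ∈ u <;> simp [hv]
    case right =>
      rintro ⟨z, w⟩ _
      refine Prod.ext ?_ ?_ <;> · funext v; by_cases hv : v ∈ u <;> simp [hv]
  rw [card_product, card_product, card_univ, Fintype.card_fun] at key
  simpa using key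

/-- Counting for one equality constraint: `2 * |{ω : ω a = ω b}| = 2^|β|` when `a ≠ b`. -/
lemma pair_count {a b : β} (hab : a ≠ b) :
    2 * (univ.filter (fun ω : β → Bool => ω a = ω b)).card = 2 ^ (Fintype.card β) := by
  classical
  have hbij : (univ.filter (fun ω : β → Bool => ω a = ω b)).card
      = (univ.filter (fun ω : β → Bool => ¬ (ω a = ω b))).card := by
    refine Finset.card_bij'
      (i := fun ω _ => Function.update ω b (!(ω b)))
      (j := fun ω _ => Function.update ω b (!(ω b)))
      ?hi ?hj ?left ?right
    case hi =>
      intro ω hω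
      simp only [mem_filter, mem_univ, true_and] at hω ⊢
      simp [Function.update_of_ne hab, hω]
    case hj =>
      intro ω hω
      simp only [mem_filter, mem_univ, true_and] at hω ⊢
      simp only [Function.update_of_ne hab, Function.update_self]
      revert hω; cases (ω a) <;> cases (ω b) <;> simp
    case left =>
      intro ω _
      simp [Function.update_idem, Function.update_self, Bool.not_not, Function.update_eq_self]
    case right =>
      intro ω _
      simp [Function.update_idem, Function.update_self, Bool.not_not, Function.update_eq_self]
  have hsplit : (univ.filter (fun ω : β → Bool => ω a = ω b)).card
      + (univ.filter (fun ω : β → Bool => ¬ (ω a = ω b))).card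
      = 2 ^ (Fintype.card β) := by
    rw [Finset.card_filter_add_card_filter_not, card_univ, Fintype.card_fun,
      Fintype.card_bool]
  rw [two_mul, hbij]
  rw [hbij] at hsplit
  exact hsplit

/-- Counting assignments satisfying a family of equality constraints on pairwise
distinct points. -/
lemma pairs_count {α : Type*} (T : Finset α) (A B : α → β)
    (hAinj : ∀ t ∈ T, ∀ t' ∈ T, A t = A t' → t = t')
    (hBinj : ∀ t ∈ T, ∀ t' ∈ T, B t = B t' → t = t')
    (hAB : ∀ t ∈ T, ∀ t' ∈ T, A t ≠ B t') :
    (univ.filter (fun ω : β → Bool => ∀ t ∈ T, ω (A t) = ω (B t))).card * 2 ^ T.card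
      = 2 ^ (Fintype.card β) := by
  classical
  revert hAinj hBinj hAB
  induction T using Finset.induction_on with
  | empty =>
    intro _ _ _
    simp [card_univ, Fintype.card_fun, Fintype.card_bool]
  | @insert t₀ T' ht₀ ih =>
    intro hAinj hBinj hAB
    set F := univ.filter (fun ω : β → Bool => ∀ t ∈ T', ω (A t) = ω (B t)) with hF
    set P := univ.filter (fun ω : β → Bool => ω (A t₀) = ω (B t₀)) with hP
    have hsplitset : univ.filter (fun ω : β → Bool => ∀ t ∈ insert t₀ T', ω (A t) = ω (B t))
        = F ∩ P := by
      ext ω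
      simp only [hF, hP, mem_inter, mem_filter, mem_univ, true_and, Finset.mem_insert]
      constructor
      · intro h
        exact ⟨fun t ht => h t (Or.inr ht), h t₀ (Or.inl rfl)⟩
      · rintro ⟨h1, h2⟩ t (rfl | ht)
        · exact h2
        · exact h1 t ht
    set u : Finset β := T'.image A ∪ T'.image B with hu
    have hFdet : DetBy F u := by
      intro ω ω' hag hω
      simp only [hF, mem_filter, mem_univ, true_and] at hω ⊢
      intro t ht
      rw [← hag (A t) (mem_union_left _ (mem_image_of_mem A ht)),
        ← hag (B t) (mem_union_right _ (mem_image_of_mem B ht))]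
      exact hω t ht
    have hAt₀ : A t₀ ∉ u := by
      rw [hu, mem_union]
      rintro (h | h) <;> rw [mem_image] at h <;> obtain ⟨t, ht, heq⟩ := h
      · exact ht₀ ((hAinj t₀ (mem_insert_self _ _) t (mem_insert_of_mem ht) heq.symm) ▸ ht)
      · exact hAB t₀ (mem_insert_self _ _) t (mem_insert_of_mem ht) heq.symm
    have hBt₀ : B t₀ ∉ u := by
      rw [hu, mem_union]
      rintro (h | h) <;> rw [mem_image] at h <;> obtain ⟨t, ht, heq⟩ := h
      · exact hAB t (mem_insert_of_mem ht) t₀ (mem_insert_self _ _) heq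
      · exact ht₀ ((hBinj t₀ (mem_insert_self _ _) t (mem_insert_of_mem ht) heq.symm) ▸ ht)
    have hPdet : DetBy P uᶜ := by
      intro ω ω' hag hω
      simp only [hP, mem_filter, mem_univ, true_and] at hω ⊢
      rw [← hag (A t₀) (mem_compl.mpr hAt₀), ← hag (B t₀) (mem_compl.mpr hBt₀)]
      exact hω
    have hprod := prod_count F P u hFdet hPdet
    have hih := ih (fun t ht t' ht' => hAinj t (mem_insert_of_mem ht) t' (mem_insert_of_mem ht'))
      (fun t ht t' ht' => hBinj t (mem_insert_of_mem ht) t' (mem_insert_of_mem ht'))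
      (fun t ht t' ht' => hAB t (mem_insert_of_mem ht) t' (mem_insert_of_mem ht'))
    have hpair := pair_count (hAB t₀ (mem_insert_self _ _) t₀ (mem_insert_self _ _))
    rw [hsplitset, card_insert_of_notMem ht₀]
    have hpos : 0 < 2 ^ Fintype.card β := pow_pos (by norm_num) _
    apply Nat.eq_of_mul_eq_mul_right hpos
    calc (F ∩ P).card * 2 ^ (T'.card + 1) * 2 ^ Fintype.card β
        = ((F ∩ P).card * 2 ^ Fintype.card β) * 2 ^ T'.card * 2 := by ring
      _ = (F.card * P.card) * 2 ^ T'.card * 2 := by rw [← hprod]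
      _ = (F.card * 2 ^ T'.card) * (2 * P.card) := by ring
      _ = 2 ^ Fintype.card β * 2 ^ Fintype.card β := by rw [hih, hpair]

variable {ι : Type*} [Fintype ι] [DecidableEq ι]

/-- The set of assignments avoiding all bad events in `S`. -/
def Cset (bad : ι → Finset (β → Bool)) (S : Finset ι) : Finset (β → Bool) :=
  univ.filter (fun ω => ∀ j ∈ S, ω ∉ bad j)

lemma Cset_anti (bad : ι → Finset (β → Bool)) {S S' : Finset ι} (h : S ⊆ S') :
    Cset bad S' ⊆ Cset bad S := by
  intro ω hω
  simp only [Cset, mem_filter, mem_univ, true_and] at hω ⊢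
  exact fun j hj => hω j (h hj)

lemma Cset_insert (bad : ι → Finset (β → Bool)) (j : ι) (S : Finset ι) :
    Cset bad (insert j S) = Cset bad S \ bad j := by
  ext ω
  simp only [Cset, mem_sdiff, mem_filter, mem_univ, true_and, Finset.mem_insert]
  constructor
  · intro h
    exact ⟨fun j' hj' => h j' (Or.inr hj'), h j (Or.inl rfl)⟩
  · rintro ⟨h1, h2⟩ j' (rfl | hj')
    · exact h2
    · exact h1 j' hj'

lemma Cset_card_univ (bad : ι → Finset (β → Bool)) :
    (Cset bad (∅ : Finset ι)).card = 2 ^ (Fintype.card β) := by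
  simp [Cset, card_univ, Fintype.card_fun, Fintype.card_bool]

section LLL

variable (vbl : ι → Finset β) (bad : ι → Finset (β → Bool)) (x : ι → ℝ)

/-- The neighbourhood of an event: other events sharing a variable. -/
def Nbr (i : ι) : Finset ι :=
  univ.filter (fun j => j ≠ i ∧ (vbl i ∩ vbl j).Nonempty)

variable (hdet : ∀ i, DetBy (bad i) (vbl i))
  (hx0 : ∀ i, 0 ≤ x i) (hx1 : ∀ i, x i < 1)
  (hmain : ∀ i, ((bad i).card : ℝ) ≤
    x i * (∏ j ∈ Nbr vbl i, (1 - x j)) * 2 ^ (Fintype.card β))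

include hdet hx0 hx1 hmain

/-- The key induction of the Lovász Local Lemma. -/
lemma lll_main : ∀ (N : ℕ) (S : Finset ι), S.card ≤ N → ∀ i ∉ S,
    (((bad i) ∩ Cset bad S).card : ℝ) ≤ x i * (Cset bad S).card := by
  intro N
  induction N with
  | zero =>
    intro S hS i hi
    have hS0 : S = ∅ := Finset.card_eq_zero.mp (Nat.le_zero.mp hS)
    subst hS0
    have hCuniv : Cset bad (∅ : Finset ι) = univ := by
      ext ω; simp [Cset]
    rw [hCuniv]
    have h1 : ((bad i ∩ univ).card : ℝ) = (bad i).card := by rw [inter_univ]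
    rw [h1, card_univ, Fintype.card_fun, Fintype.card_bool]
    push_cast
    calc ((bad i).card : ℝ) ≤ x i * (∏ j ∈ Nbr vbl i, (1 - x j)) * 2 ^ (Fintype.card β) :=
          hmain i
      _ ≤ x i * 1 * 2 ^ (Fintype.card β) := by
          apply mul_le_mul_of_nonneg_right _ (by positivity)
          apply mul_le_mul_of_nonneg_left _ (hx0 i)
          apply Finset.prod_le_one
          · intro j _; linarith [hx1 j]
          · intro j _; linarith [hx0 j]
      _ = x i * 2 ^ (Fintype.card β) := by ring
  | succ N ih =>
    intro S hS i hi
    set S₁ : Finset ι := S.filter (fun j => (vbl i ∩ vbl j).Nonempty) with hS₁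
    set S₂ : Finset ι := S \ S₁ with hS₂
    have hS₂sub : S₂ ⊆ S := Finset.sdiff_subset
    have hS₁sub : S₁ ⊆ S := Finset.filter_subset _ _
    -- Step (a): monotonicity
    have ha : ((bad i ∩ Cset bad S).card : ℝ) ≤ ((bad i ∩ Cset bad S₂).card : ℝ) := by
      exact_mod_cast Nat.cast_le.mpr (Finset.card_le_card
        (inter_subset_inter (Finset.Subset.refl _) (Cset_anti bad hS₂sub)))
    -- Step (b): independence
    have hCdet : DetBy (Cset bad S₂) (vbl i)ᶜ := by
      intro ω ω' hag hω
      simp only [Cset, mem_filter, mem_univ, true_and] at hω ⊢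
      intro j hj
      have hnov : ∀ v ∈ vbl j, v ∈ (vbl i)ᶜ := by
        intro v hv
        rw [mem_compl]
        intro hvi
        have : j ∈ S₁ := by
          rw [hS₁, mem_filter]
          exact ⟨hS₂sub hj, ⟨v, mem_inter.mpr ⟨hvi, hv⟩⟩⟩
        rw [hS₂, mem_sdiff] at hj
        exact hj.2 this
      intro hbad
      exact hω j hj (hdet j ω' ω (fun v hv => (hag v (hnov v hv)).symm) hbad)
    have hb : ((bad i).card : ℝ) * ((Cset bad S₂).card : ℝ)
        = ((bad i ∩ Cset bad S₂).card : ℝ) * 2 ^ (Fintype.card β) := by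
      exact_mod_cast congrArg (Nat.cast (R := ℝ))
        (prod_count (bad i) (Cset bad S₂) (vbl i) (hdet i) hCdet)
    -- Step (c): peeling
    have hpeel : ∀ T : Finset ι, T ⊆ S₁ →
        (∏ j ∈ T, (1 - x j)) * ((Cset bad S₂).card : ℝ) ≤ ((Cset bad (S₂ ∪ T)).card : ℝ) := by
      intro T
      induction T using Finset.induction_on with
      | empty => intro _; simp
      | @insert j T' hj ihT =>
        intro hTsub
        have hjS₁ : j ∈ S₁ := hTsub (mem_insert_self _ _)
        have hT'sub : T' ⊆ S₁ := fun a ha => hTsub (mem_insert_of_mem ha)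
        have hjnot : j ∉ S₂ ∪ T' := by
          rw [mem_union]
          rintro (h | h)
          · rw [hS₂, mem_sdiff] at h; exact h.2 hjS₁
          · exact hj h
        have hcard : (S₂ ∪ T').card ≤ N := by
          have hsub' : S₂ ∪ T' ⊆ S.erase j := by
            intro a ha
            rw [mem_erase]
            rw [mem_union] at ha
            constructor
            · rintro rfl; exact hjnot (by rwa [mem_union])
            · rcases ha with h | h
              · exact hS₂sub h
              · exact hS₁sub (hT'sub h)
          calc (S₂ ∪ T').card ≤ (S.erase j).card := Finset.card_le_card hsub'
            _ = S.card - 1 := Finset.card_erase_of_mem (hS₁sub hjS₁)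
            _ ≤ N := by omega
        have hmainj := ih (S₂ ∪ T') hcard j hjnot
        have hins : Cset bad (S₂ ∪ insert j T') = Cset bad (S₂ ∪ T') \ bad j := by
          rw [Finset.union_insert, Cset_insert]
        have hcards : ((Cset bad (S₂ ∪ insert j T')).card : ℝ)
            = ((Cset bad (S₂ ∪ T')).card : ℝ) - ((Cset bad (S₂ ∪ T') ∩ bad j).card : ℝ) := by
          rw [hins]
          have := Finset.card_sdiff_add_card_inter (Cset bad (S₂ ∪ T')) (bad j)
          push_cast [← this]
          ring
        have hflip : ((Cset bad (S₂ ∪ T') ∩ bad j).card : ℝ)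
            = ((bad j ∩ Cset bad (S₂ ∪ T')).card : ℝ) := by
          rw [inter_comm]
        rw [hcards, hflip]
        have h1mx : 0 ≤ 1 - x j := by linarith [hx1 j]
        calc (∏ a ∈ insert j T', (1 - x a)) * ((Cset bad S₂).card : ℝ)
            = (1 - x j) * ((∏ a ∈ T', (1 - x a)) * ((Cset bad S₂).card : ℝ)) := by
              rw [Finset.prod_insert hj]; ring
          _ ≤ (1 - x j) * ((Cset bad (S₂ ∪ T')).card : ℝ) := by
              apply mul_le_mul_of_nonneg_left (ihT hT'sub) h1mx
          _ = ((Cset bad (S₂ ∪ T')).card : ℝ) - x j * ((Cset bad (S₂ ∪ T')).card : ℝ) := by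
              ring
          _ ≤ ((Cset bad (S₂ ∪ T')).card : ℝ) - ((bad j ∩ Cset bad (S₂ ∪ T')).card : ℝ) := by
              linarith [hmainj]
    -- Step (d): combine
    have hS₁Γ : S₁ ⊆ Nbr vbl i := by
      intro j hj
      rw [hS₁, mem_filter] at hj
      rw [Nbr, mem_filter]
      refine ⟨mem_univ _, ?_, hj.2⟩
      rintro rfl
      exact hi hj.1
    have hprodle : (∏ j ∈ Nbr vbl i, (1 - x j)) ≤ (∏ j ∈ S₁, (1 - x j)) := by
      rw [← Finset.prod_sdiff hS₁Γ]
      have h1 : (∏ j ∈ Nbr vbl i \ S₁, (1 - x j)) ≤ 1 := by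
        apply Finset.prod_le_one
        · intro j _; linarith [hx1 j]
        · intro j _; linarith [hx0 j]
      have h2 : (0:ℝ) ≤ ∏ j ∈ S₁, (1 - x j) := by
        apply Finset.prod_nonneg
        intro j _; linarith [hx1 j]
      nlinarith
    have hunion : S₂ ∪ S₁ = S := by
      rw [hS₂]
      exact Finset.sdiff_union_of_subset hS₁sub
    have hbound : ((bad i ∩ Cset bad S₂).card : ℝ)
        ≤ x i * (∏ j ∈ S₁, (1 - x j)) * ((Cset bad S₂).card : ℝ) := by
      have hpow : (0:ℝ) < 2 ^ (Fintype.card β) := by positivity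
      rw [← mul_le_mul_iff_of_pos_right hpow]
      calc ((bad i ∩ Cset bad S₂).card : ℝ) * 2 ^ (Fintype.card β)
          = ((bad i).card : ℝ) * ((Cset bad S₂).card : ℝ) := hb.symm
        _ ≤ (x i * (∏ j ∈ Nbr vbl i, (1 - x j)) * 2 ^ (Fintype.card β))
            * ((Cset bad S₂).card : ℝ) := by
            apply mul_le_mul_of_nonneg_right (hmain i) (by positivity)
        _ ≤ (x i * (∏ j ∈ S₁, (1 - x j)) * 2 ^ (Fintype.card β))
            * ((Cset bad S₂).card : ℝ) := by
            apply mul_le_mul_of_nonneg_right _ (by positivity)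
            apply mul_le_mul_of_nonneg_right _ (by positivity)
            apply mul_le_mul_of_nonneg_left hprodle (hx0 i)
        _ = (x i * (∏ j ∈ S₁, (1 - x j)) * ((Cset bad S₂).card : ℝ)) * 2 ^ (Fintype.card β) := by
            ring
    calc ((bad i ∩ Cset bad S).card : ℝ)
        ≤ ((bad i ∩ Cset bad S₂).card : ℝ) := ha
      _ ≤ x i * (∏ j ∈ S₁, (1 - x j)) * ((Cset bad S₂).card : ℝ) := hbound
      _ = x i * ((∏ j ∈ S₁, (1 - x j)) * ((Cset bad S₂).card : ℝ)) := by ring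
      _ ≤ x i * ((Cset bad (S₂ ∪ S₁)).card : ℝ) := by
          apply mul_le_mul_of_nonneg_left (hpeel S₁ (Finset.Subset.refl _)) (hx0 i)
      _ = x i * ((Cset bad S).card : ℝ) := by rw [hunion]

/-- Positivity of the probability of avoiding all bad events. -/
lemma lll_pos : ∀ S : Finset ι, (0:ℝ) < ((Cset bad S).card : ℝ) := by
  intro S
  induction S using Finset.induction_on with
  | empty =>
    rw [Cset_card_univ]
    positivity
  | @insert i S hi ihS =>
    have hmainS := lll_main vbl bad x hdet hx0 hx1 hmain S.card S le_rfl i hi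
    rw [Cset_insert]
    have := Finset.card_sdiff_add_card_inter (Cset bad S) (bad i)
    have hcards : ((Cset bad S \ bad i).card : ℝ)
        = ((Cset bad S).card : ℝ) - ((Cset bad S ∩ bad i).card : ℝ) := by
      push_cast [← this]; ring
    rw [hcards, inter_comm] at *
    have : ((bad i ∩ Cset bad S).card : ℝ) ≤ x i * ((Cset bad S).card : ℝ) := by
      rw [inter_comm]; exact hmainS
    nlinarith [hx1 i, ihS]

/-- The Lovász Local Lemma: there is an assignment avoiding all bad events. -/
theorem lll : ∃ ω : β → Bool, ∀ i : ι, ω ∉ bad i := by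
  have hpos := lll_pos vbl bad x hdet hx0 hx1 hmain (univ : Finset ι)
  have : (Cset bad (univ : Finset ι)).Nonempty := by
    rw [← Finset.card_pos]
    exact_mod_cast hpos
  obtain ⟨ω, hω⟩ := this
  have hω' := (mem_filter.mp hω).2
  exact ⟨ω, fun i => hω' i (mem_univ i)⟩

end LLL



/-- The summable weight sequence. -/
noncomputable def bw (j : ℕ) : ℝ := 4 * (8 * j + 24) * (3/4 : ℝ) ^ (8 * j + 24)

lemma bw_nonneg (j : ℕ) : 0 ≤ bw j := by
  unfold bw; positivity

lemma bw_le (j : ℕ) : bw j ≤ (1/6 : ℝ) * (1/2) ^ j := by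
  induction j with
  | zero =>
    unfold bw
    norm_num
  | succ j ih =>
    have hstep : bw (j + 1) ≤ (1/2 : ℝ) * bw j := by
      unfold bw
      have h1 : 8 * (j+1) + 24 = (8 * j + 24) + 8 := by ring
      rw [h1, pow_add]
      have hp : (0:ℝ) < (3/4 : ℝ) ^ (8 * j + 24) := by positivity
      rw [show (4 : ℝ) * (8 * ↑(j+1) + 24) * ((3/4:ℝ) ^ (8*j+24) * (3/4)^8)
            = (4 * (8 * (j:ℝ) + 32) * (3/4)^8) * (3/4:ℝ)^(8*j+24) by push_cast; ring,
          show (1/2 : ℝ) * (4 * (8 * ↑j + 24) * (3/4:ℝ)^(8*j+24))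
            = (2 * (8 * (j:ℝ) + 24)) * (3/4:ℝ)^(8*j+24) by ring]
      apply mul_le_mul_of_nonneg_right _ (le_of_lt hp)
      norm_num
      nlinarith [Nat.cast_nonneg (α := ℝ) j]
    calc bw (j+1) ≤ (1/2 : ℝ) * bw j := hstep
      _ ≤ (1/2 : ℝ) * ((1/6) * (1/2)^j) := by linarith [ih, bw_nonneg j]
      _ = (1/6 : ℝ) * (1/2)^(j+1) := by ring
  
lemma bw_sum_le (S : Finset ℕ) : (∑ j ∈ S, bw j) ≤ 1/3 := by
  obtain ⟨N, hN⟩ := S.exists_nat_subset_range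
  calc (∑ j ∈ S, bw j) ≤ ∑ j ∈ range N, bw j :=
        Finset.sum_le_sum_of_subset_of_nonneg hN (fun j _ _ => bw_nonneg j)
    _ ≤ ∑ j ∈ range N, (1/6 : ℝ) * (1/2)^j := Finset.sum_le_sum (fun j _ => bw_le j)
    _ = (1/6 : ℝ) * ∑ j ∈ range N, (1/2 : ℝ)^j := by rw [Finset.mul_sum]
    _ ≤ (1/6 : ℝ) * 2 := by
        have := sum_geometric_two_le N
        nlinarith
    _ = 1/3 := by norm_num

lemma bw_le_one (j : ℕ) : bw j ≤ 1 := by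
  have := bw_le j
  have h2 : ((1:ℝ)/2)^j ≤ 1 := pow_le_one₀ (by norm_num) (by norm_num)
  nlinarith

/-- `∏ (1 - aᵢ) ≥ 1 - ∑ aᵢ`. -/
lemma prod_one_sub_ge {α : Type*} (Q : Finset α) (a : α → ℝ)
    (h0 : ∀ q ∈ Q, 0 ≤ a q) (h1 : ∀ q ∈ Q, a q ≤ 1) :
    1 - (∑ q ∈ Q, a q) ≤ ∏ q ∈ Q, (1 - a q) := by
  classical
  induction Q using Finset.induction_on with
  | empty => simp
  | @insert q Q hq ih =>
    rw [Finset.prod_insert hq, Finset.sum_insert hq]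
    have h0' : ∀ r ∈ Q, 0 ≤ a r := fun r hr => h0 r (mem_insert_of_mem hr)
    have h1' : ∀ r ∈ Q, a r ≤ 1 := fun r hr => h1 r (mem_insert_of_mem hr)
    have ihQ := ih h0' h1'
    have hq0 := h0 q (mem_insert_self _ _)
    have hq1 := h1 q (mem_insert_self _ _)
    have hsum : (0:ℝ) ≤ ∑ r ∈ Q, a r := Finset.sum_nonneg h0'
    nlinarith [Finset.prod_nonneg (fun r (hr : r ∈ Q) => by linarith [h1' r hr] : ∀ r ∈ Q, (0:ℝ) ≤ 1 - a r)]

/-- Bernoulli-type bound. -/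
lemma one_sub_pow_ge (c : ℝ) (hc0 : 0 ≤ c) (hc1 : c ≤ 1) (m : ℕ) :
    1 - m * c ≤ (1 - c) ^ m := by
  have h2 : (1:ℝ) + m * (-c) ≤ (1 + -c) ^ m := one_add_mul_le_pow (by linarith) m
  rw [mul_neg, ← sub_eq_add_neg, ← sub_eq_add_neg] at h2
  exact h2



variable {G : Type*} [Group G]

lemma shiftB_one (x : G → Bool) : shiftB (1:G) x = x := by
  funext h; simp [shiftB]

lemma shiftB_mul (g g' : G) (x : G → Bool) : shiftB g (shiftB g' x) = shiftB (g * g') x := by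
  funext h; simp [shiftB, mul_assoc]

lemma continuous_shiftB (g : G) : Continuous (shiftB (G := G) g) :=
  continuous_pi (fun h => continuous_apply (g⁻¹ * h))

/-- Arbitrarily large finite sets `T` with `T ∩ sT = ∅`. -/
lemma exists_T [Infinite G] (s : G) (hs : s ≠ 1) (n : ℕ) :
    ∃ T : Finset G, T.card = n ∧ ∀ t ∈ T, ∀ t' ∈ T, s * t' ≠ t := by
  induction n with
  | zero => exact ⟨∅, rfl, by simp⟩
  | succ n ih =>
    obtain ⟨T, hcard, hfree⟩ := ih
    obtain ⟨g, hg⟩ := Infinite.exists_notMem_finset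
      (T ∪ T.image (fun t => s * t) ∪ T.image (fun t => s⁻¹ * t))
    simp only [mem_union, mem_image, not_or, not_exists] at hg
    obtain ⟨⟨hg1, hg2⟩, hg3⟩ := hg
    have hgT : g ∉ T := hg1
    refine ⟨insert g T, by rw [card_insert_of_notMem hgT, hcard], ?_⟩
    intro t ht t' ht'
    rw [Finset.mem_insert] at ht ht'
    rcases ht with rfl | ht <;> rcases ht' with rfl | ht'
    · intro h; exact hs (mul_eq_right.mp h)
    · intro h; exact hg2 t' ⟨ht', h⟩
    · intro h
      exact hg3 t ⟨ht, by rw [← h]; group⟩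
    · exact hfree t ht t' ht'

/-- The key finite satisfiability stage. -/
lemma finite_stage {G : Type*} [Group G] [Infinite G]
    (f : {s : G // s ≠ 1} → ℕ) (hf : Function.Injective f)
    (n : {s : G // s ≠ 1} → ℕ) (hn : ∀ σ, n σ = 8 * f σ + 24)
    (T : {s : G // s ≠ 1} → Finset G)
    (hTcard : ∀ σ, (T σ).card = n σ)
    (hTfree : ∀ σ, ∀ t ∈ T σ, ∀ t' ∈ T σ, (σ : G) * t' ≠ t)
    (u : Finset ({s : G // s ≠ 1} × G)) :
    ∃ x : G → Bool, ∀ i ∈ u, ∃ t ∈ T i.1, x (i.2 * t) ≠ x (i.2 * ((i.1 : G) * t)) := by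
  classical
  rcases u.eq_empty_or_nonempty with rfl | hune
  · exact ⟨fun _ => false, by simp⟩
  -- the windows
  set sshape : {s : G // s ≠ 1} → Finset G :=
    fun σ => T σ ∪ (T σ).image (fun t => (σ : G) * t) with hsshape
  have hsshape_card : ∀ σ, (sshape σ).card ≤ 2 * n σ := by
    intro σ
    calc (sshape σ).card ≤ (T σ).card + ((T σ).image (fun t => (σ : G) * t)).card :=
          Finset.card_union_le _ _
      _ ≤ (T σ).card + (T σ).card := by
          have := Finset.card_image_le (s := T σ) (f := fun t => (σ : G) * t)
          omega
      _ = 2 * n σ := by rw [hTcard]; ring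
  set W : ({s : G // s ≠ 1} × G) → Finset G :=
    fun i => (sshape i.1).image (fun a => i.2 * a) with hW
  set Vfin : Finset G := u.biUnion W with hVfin
  -- the finite sample space
  set β : Type _ := {a : G // a ∈ Vfin} with hβ
  have hβne : Nonempty β := by
    obtain ⟨i, hi⟩ := hune
    have hTne : (T i.1).Nonempty := by
      rw [← Finset.card_pos, hTcard, hn]; omega
    obtain ⟨t, ht⟩ := hTne
    refine ⟨⟨i.2 * t, ?_⟩⟩
    rw [hVfin, Finset.mem_biUnion]
    exact ⟨i, hi, by
      rw [hW, Finset.mem_image]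
      exact ⟨t, by rw [hsshape]; exact Finset.mem_union_left _ ht, rfl⟩⟩
  set P : G → β := fun a => if h : a ∈ Vfin then ⟨a, h⟩ else Classical.arbitrary β with hP
  -- membership facts
  have hmemW : ∀ i ∈ u, ∀ t ∈ T i.1, (i.2 * t ∈ W i ∧ i.2 * ((i.1 : G) * t) ∈ W i) := by
    intro i hi t ht
    constructor
    · rw [hW, Finset.mem_image]
      exact ⟨t, Finset.mem_union_left _ ht, rfl⟩
    · rw [hW, Finset.mem_image]
      exact ⟨(i.1 : G) * t, Finset.mem_union_right _ (Finset.mem_image_of_mem _ ht), rfl⟩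
  have hWV : ∀ i ∈ u, ∀ a ∈ W i, a ∈ Vfin := by
    intro i hi a ha
    rw [hVfin, Finset.mem_biUnion]
    exact ⟨i, hi, ha⟩
  -- events over the subtype of the finite family
  set ι : Type _ := {i // i ∈ u} with hι
  set vbl : ι → Finset β := fun i => (W i.1).subtype (fun a => a ∈ Vfin) with hvbl
  set bad : ι → Finset (β → Bool) := fun i =>
    univ.filter (fun ω : β → Bool =>
      ∀ t ∈ T i.1.1, ω (P (i.1.2 * t)) = ω (P (i.1.2 * ((i.1.1 : G) * t)))) with hbad
  set xw : ι → ℝ := fun i => (3/4 : ℝ) ^ (n i.1.1) with hxw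
  have hPval : ∀ (a : G) (h : a ∈ Vfin), P a = ⟨a, h⟩ := by
    intro a h; rw [hP]; simp [h]
  have hPmem : ∀ (i : ι) (t : G), t ∈ T i.1.1 →
      (P (i.1.2 * t) ∈ vbl i ∧ P (i.1.2 * ((i.1.1 : G) * t)) ∈ vbl i ∧
       (P (i.1.2 * t) : G) = i.1.2 * t ∧ (P (i.1.2 * ((i.1.1 : G) * t)) : G) = i.1.2 * ((i.1.1 : G) * t)) := by
    intro i t ht
    obtain ⟨h1, h2⟩ := hmemW i.1 i.2 t ht
    have hv1 := hWV i.1 i.2 _ h1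
    have hv2 := hWV i.1 i.2 _ h2
    rw [hvbl]
    rw [hPval _ hv1, hPval _ hv2]
    refine ⟨?_, ?_, rfl, rfl⟩ <;> rw [Finset.mem_subtype] <;> assumption
  -- determinedness
  have hdet : ∀ i, DetBy (bad i) (vbl i) := by
    intro i ω ω' hag hω
    rw [hbad, mem_filter] at hω ⊢
    refine ⟨mem_univ _, ?_⟩
    intro t ht
    obtain ⟨m1, m2, _, _⟩ := hPmem i t ht
    rw [← hag _ m1, ← hag _ m2]
    exact hω.2 t ht
  -- counting
  have hcount : ∀ i : ι, ((bad i).card) * 2 ^ (n i.1.1) = 2 ^ (Fintype.card β) := by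
    intro i
    have := pairs_count (β := β) (T i.1.1)
      (fun t => P (i.1.2 * t)) (fun t => P (i.1.2 * ((i.1.1 : G) * t)))
      ?hA ?hB ?hAB
    case hA =>
      intro t ht t' ht' heq
      obtain ⟨_, _, e1, _⟩ := hPmem i t ht
      obtain ⟨_, _, e1', _⟩ := hPmem i t' ht'
      have : (P (i.1.2 * t) : G) = (P (i.1.2 * t') : G) := congrArg Subtype.val heq
      rw [e1, e1'] at this
      exact mul_left_cancel this
    case hB =>
      intro t ht t' ht' heq
      obtain ⟨_, _, _, e2⟩ := hPmem i t ht
      obtain ⟨_, _, _, e2'⟩ := hPmem i t' ht'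
      have : (P (i.1.2 * ((i.1.1 : G) * t)) : G) = (P (i.1.2 * ((i.1.1 : G) * t')) : G) :=
        congrArg Subtype.val heq
      rw [e2, e2'] at this
      exact mul_left_cancel (mul_left_cancel this)
    case hAB =>
      intro t ht t' ht' heq
      obtain ⟨_, _, e1, _⟩ := hPmem i t ht
      obtain ⟨_, _, _, e2'⟩ := hPmem i t' ht'
      have : (P (i.1.2 * t) : G) = (P (i.1.2 * ((i.1.1 : G) * t')) : G) := congrArg Subtype.val heq
      rw [e1, e2'] at this
      exact hTfree i.1.1 t ht t' ht' (mul_left_cancel this).symm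
    rw [hTcard] at this
    rw [hbad]
    exact this
  -- weight bounds
  have hx0 : ∀ i, 0 ≤ xw i := fun i => by rw [hxw]; positivity
  have hx1 : ∀ i, xw i < 1 := by
    intro i
    rw [hxw]
    apply pow_lt_one₀ (by norm_num) (by norm_num)
    rw [hn]; omega
  -- neighbour fiber counting
  have hfiber : ∀ (i : ι) (σ' : {s : G // s ≠ 1}),
      ((Nbr vbl i).filter (fun j => j.1.1 = σ')).card ≤ 2 * n i.1.1 * (2 * n σ') := by
    intro i σ'
    set F : ι → G × G := fun j =>
      if h : ∃ p : G × G, p.1 ∈ sshape i.1.1 ∧ p.2 ∈ sshape j.1.1 ∧ i.1.2 * p.1 = j.1.2 * p.2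
      then h.choose else (1, 1) with hF
    have hwitness : ∀ j ∈ (Nbr vbl i).filter (fun j : ι => j.1.1 = σ'),
        ∃ p : G × G, p.1 ∈ sshape i.1.1 ∧ p.2 ∈ sshape j.1.1 ∧ i.1.2 * p.1 = j.1.2 * p.2 := by
      intro j hj
      simp only [Nbr, Finset.mem_filter, Finset.mem_univ, true_and] at hj
      obtain ⟨⟨-, v, hv⟩, hjσ⟩ := hj
      rw [Finset.mem_inter, hvbl, Finset.mem_subtype, Finset.mem_subtype] at hv
      obtain ⟨hv1, hv2⟩ := hv
      rw [hW, Finset.mem_image] at hv1 hv2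
      obtain ⟨a, ha, hav⟩ := hv1
      obtain ⟨b, hb, hbv⟩ := hv2
      exact ⟨(a, b), ha, hb, by rw [hav, hbv]⟩
    have hFspec : ∀ j ∈ (Nbr vbl i).filter (fun j : ι => j.1.1 = σ'),
        (F j).1 ∈ sshape i.1.1 ∧ (F j).2 ∈ sshape j.1.1 ∧ i.1.2 * (F j).1 = j.1.2 * (F j).2 := by
      intro j hj
      have h := hwitness j hj
      rw [hF]
      simp only [h, dif_pos]
      exact h.choose_spec
    have hmaps : ∀ j ∈ (Nbr vbl i).filter (fun j : ι => j.1.1 = σ'),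
        F j ∈ (sshape i.1.1) ×ˢ (sshape σ') := by
      intro j hj
      obtain ⟨h1, h2, _⟩ := hFspec j hj
      rw [Finset.mem_product]
      refine ⟨h1, ?_⟩
      have hjσ : j.1.1 = σ' := (Finset.mem_filter.mp hj).2
      rwa [hjσ] at h2
    have hinj : Set.InjOn F ((Nbr vbl i).filter (fun j : ι => j.1.1 = σ') : Finset ι) := by
      intro j1 hj1 j2 hj2 heq
      rw [Finset.mem_coe] at hj1 hj2
      obtain ⟨_, _, he1⟩ := hFspec j1 hj1
      obtain ⟨_, _, he2⟩ := hFspec j2 hj2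
      rw [heq] at he1
      have hk : j1.1.2 = j2.1.2 := mul_right_cancel (he1.symm.trans he2)
      have hσ : j1.1.1 = j2.1.1 :=
        ((Finset.mem_filter.mp hj1).2).trans ((Finset.mem_filter.mp hj2).2).symm
      exact Subtype.ext (Prod.ext hσ hk)
    calc ((Nbr vbl i).filter (fun j : ι => j.1.1 = σ')).card
        ≤ ((sshape i.1.1) ×ˢ (sshape σ')).card :=
          Finset.card_le_card_of_injOn F hmaps hinj
      _ = (sshape i.1.1).card * (sshape σ').card := Finset.card_product _ _
      _ ≤ 2 * n i.1.1 * (2 * n σ') :=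
          Nat.mul_le_mul (hsshape_card _) (hsshape_card _)
  -- the product over neighbours
  have hprodNbr : ∀ i : ι, ((2:ℝ)/3) ^ (n i.1.1) ≤ ∏ j ∈ Nbr vbl i, (1 - xw j) := by
    intro i
    set Q := (Nbr vbl i).image (fun j : ι => j.1.1) with hQ
    have hcomp : ∏ j ∈ Nbr vbl i, (1 - xw j)
        = ∏ σ' ∈ Q, (1 - (3/4:ℝ)^(n σ'))
            ^ ((Nbr vbl i).filter (fun j : ι => j.1.1 = σ')).card := by
      rw [hQ]
      exact Finset.prod_comp (fun σ' => 1 - (3/4:ℝ)^(n σ')) (fun j : ι => j.1.1)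
    have hc0 : ∀ σ' : {s : G // s ≠ 1}, (0:ℝ) ≤ (3/4:ℝ)^(n σ') := fun σ' => by positivity
    have hc1 : ∀ σ' : {s : G // s ≠ 1}, (3/4:ℝ)^(n σ') ≤ 1 :=
      fun σ' => pow_le_one₀ (by norm_num) (by norm_num)
    have hinner : (2:ℝ)/3 ≤ ∏ σ' ∈ Q, (1 - (3/4:ℝ)^(n σ')) ^ (4 * n σ') := by
      have hber : ∀ σ' ∈ Q, 1 - bw (f σ') ≤ (1 - (3/4:ℝ)^(n σ')) ^ (4 * n σ') := by
        intro σ' _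
        have h := one_sub_pow_ge ((3/4:ℝ)^(n σ')) (hc0 σ') (hc1 σ') (4 * n σ')
        have hbweq : ((4 * n σ' : ℕ) : ℝ) * (3/4:ℝ)^(n σ') = bw (f σ') := by
          rw [hn σ']
          unfold bw
          push_cast
          ring
        rw [hbweq] at h
        exact h
      have hnn : ∀ σ' ∈ Q, (0:ℝ) ≤ 1 - bw (f σ') := by
        intro σ' _
        have := bw_le_one (f σ')
        linarith
      have hstep1 : ∏ σ' ∈ Q, (1 - bw (f σ'))
          ≤ ∏ σ' ∈ Q, (1 - (3/4:ℝ)^(n σ')) ^ (4 * n σ') :=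
        Finset.prod_le_prod hnn hber
      have hstep2 : 1 - (∑ σ' ∈ Q, bw (f σ')) ≤ ∏ σ' ∈ Q, (1 - bw (f σ')) :=
        prod_one_sub_ge Q (fun σ' => bw (f σ')) (fun σ' _ => bw_nonneg _)
          (fun σ' _ => bw_le_one _)
      have hstep3 : (∑ σ' ∈ Q, bw (f σ')) ≤ 1/3 := by
        have himg : ∑ j ∈ Q.image f, bw j = ∑ σ' ∈ Q, bw (f σ') :=
          Finset.sum_image (fun a _ b _ hab => hf hab)
        rw [← himg]
        exact bw_sum_le _
      linarith
    have hmono : ∀ σ' ∈ Q, (1 - (3/4:ℝ)^(n σ')) ^ (2 * n i.1.1 * (2 * n σ'))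
        ≤ (1 - (3/4:ℝ)^(n σ'))
            ^ ((Nbr vbl i).filter (fun j : ι => j.1.1 = σ')).card := by
      intro σ' _
      apply pow_le_pow_of_le_one (by linarith [hc1 σ']) (by linarith [hc0 σ'])
        (hfiber i σ')
    calc ((2:ℝ)/3) ^ (n i.1.1)
        ≤ (∏ σ' ∈ Q, (1 - (3/4:ℝ)^(n σ')) ^ (4 * n σ')) ^ (n i.1.1) := by
          apply pow_le_pow_left₀ (by norm_num) hinner
      _ = ∏ σ' ∈ Q, (1 - (3/4:ℝ)^(n σ')) ^ (2 * n i.1.1 * (2 * n σ')) := by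
          rw [← Finset.prod_pow]
          apply Finset.prod_congr rfl
          intro σ' _
          rw [← pow_mul]
          congr 1
          ring
      _ ≤ ∏ σ' ∈ Q, (1 - (3/4:ℝ)^(n σ'))
            ^ ((Nbr vbl i).filter (fun j : ι => j.1.1 = σ')).card := by
          apply Finset.prod_le_prod _ hmono
          intro σ' _
          exact pow_nonneg (by linarith [hc1 σ']) _
      _ = ∏ j ∈ Nbr vbl i, (1 - xw j) := hcomp.symm
  -- the local lemma hypothesis
  have hmain : ∀ i : ι, ((bad i).card : ℝ) ≤
      xw i * (∏ j ∈ Nbr vbl i, (1 - xw j)) * 2 ^ (Fintype.card β) := by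
    intro i
    have hcR : ((bad i).card : ℝ) * 2 ^ (n i.1.1) = 2 ^ (Fintype.card β) := by
      exact_mod_cast hcount i
    have hp2 : (0:ℝ) < 2 ^ (n i.1.1) := by positivity
    rw [← mul_le_mul_iff_of_pos_right hp2, hcR]
    have hone : (1:ℝ) ≤ xw i * (∏ j ∈ Nbr vbl i, (1 - xw j)) * 2 ^ (n i.1.1) := by
      calc (1:ℝ) = ((3/4:ℝ) * (2/3) * 2) ^ (n i.1.1) := by norm_num
        _ = (3/4:ℝ)^(n i.1.1) * ((2:ℝ)/3)^(n i.1.1) * 2^(n i.1.1) := by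
            rw [mul_pow, mul_pow]
        _ ≤ (3/4:ℝ)^(n i.1.1) * (∏ j ∈ Nbr vbl i, (1 - xw j)) * 2^(n i.1.1) := by
            apply mul_le_mul_of_nonneg_right _ (by positivity)
            apply mul_le_mul_of_nonneg_left (hprodNbr i) (by positivity)
        _ = xw i * (∏ j ∈ Nbr vbl i, (1 - xw j)) * 2 ^ (n i.1.1) := by rw [hxw]
    calc (2:ℝ) ^ (Fintype.card β) = 1 * 2 ^ (Fintype.card β) := by ring
      _ ≤ (xw i * (∏ j ∈ Nbr vbl i, (1 - xw j)) * 2 ^ (n i.1.1)) * 2 ^ (Fintype.card β) := by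
          apply mul_le_mul_of_nonneg_right hone (by positivity)
      _ = xw i * (∏ j ∈ Nbr vbl i, (1 - xw j)) * 2 ^ (Fintype.card β) * 2 ^ (n i.1.1) := by
          ring
  -- apply the local lemma
  obtain ⟨ω, hω⟩ := lll vbl bad xw hdet hx0 hx1 hmain
  refine ⟨fun g => if h : g ∈ Vfin then ω ⟨g, h⟩ else false, ?_⟩
  intro i hi
  have hbadi := hω ⟨i, hi⟩
  rw [hbad, mem_filter] at hbadi
  push_neg at hbadi
  obtain ⟨t, ht, hne⟩ := hbadi (mem_univ _)
  refine ⟨t, ht, ?_⟩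
  obtain ⟨_, _, e1, e2⟩ := hPmem ⟨i, hi⟩ t ht
  obtain ⟨hw1, hw2⟩ := hmemW i hi t ht
  have hv1 := hWV i hi _ hw1
  have hv2 := hWV i hi _ hw2
  simp only [hv1, hv2, dif_pos]
  intro hcontra
  apply hne
  rw [hPval _ hv1, hPval _ hv2]
  exact hcontra



end MFS

/-- Every countably infinite group admits a minimal free subshift: a nonempty closed
shift-invariant `X ⊆ {0,1}^G` in which every orbit is dense and on which `G` acts freely. -/
theorem exists_minimal_free_subshift {G : Type*} [Group G] [Countable G] [Infinite G] :
    ∃ X : Set (G → Bool), X.Nonempty ∧ IsClosed X ∧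
      (∀ g : G, ∀ x ∈ X, shiftB g x ∈ X) ∧
      (∀ x ∈ X, X ⊆ closure (Set.range fun g : G => shiftB g x)) ∧
      (∀ x ∈ X, ∀ g : G, g ≠ 1 → shiftB g x ≠ x) := by
  classical
  obtain ⟨f, hf⟩ := exists_injective_nat {s : G // s ≠ 1}
  set n : {s : G // s ≠ 1} → ℕ := fun σ => 8 * f σ + 24 with hn
  have hTex : ∀ σ : {s : G // s ≠ 1}, ∃ T : Finset G,
      T.card = n σ ∧ ∀ t ∈ T, ∀ t' ∈ T, (σ : G) * t' ≠ t :=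
    fun σ => MFS.exists_T σ.1 σ.2 (n σ)
  choose T hTcard hTfree using hTex
  -- the basic clopen conditions
  set A : ({s : G // s ≠ 1} × G) → Set (G → Bool) := fun i =>
    {x | ∃ t ∈ T i.1, x (i.2 * t) ≠ x (i.2 * ((i.1 : G) * t))} with hA
  have hAclosed : ∀ i, IsClosed (A i) := by
    intro i
    have : A i = ⋃ t ∈ (T i.1 : Set G), {x : G → Bool | x (i.2 * t) ≠ x (i.2 * ((i.1 : G) * t))} := by
      ext x; simp [hA]
    rw [this]
    apply Set.Finite.isClosed_biUnion (Finset.finite_toSet _)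
    intro t _
    have hc : Continuous (fun x : G → Bool => (x (i.2 * t), x (i.2 * ((i.1 : G) * t)))) :=
      (continuous_apply _).prodMk (continuous_apply _)
    have : IsClosed {p : Bool × Bool | p.1 ≠ p.2} := isClosed_discrete _
    exact this.preimage hc
  -- nonemptiness of each finite sub-intersection, via the LLL
  have hfin : ∀ u : Finset ({s : G // s ≠ 1} × G),
      (Set.univ ∩ ⋂ i ∈ u, A i).Nonempty := by
    intro u
    obtain ⟨x, hx⟩ := MFS.finite_stage f hf n (fun σ => rfl) T hTcard hTfree u
    refine ⟨x, Set.mem_univ _, ?_⟩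
    rw [Set.mem_iInter₂]
    intro i hi
    obtain ⟨t, ht, hne⟩ := hx i hi
    exact ⟨t, ht, hne⟩
  -- the full intersection
  have hX₀ne : (Set.univ ∩ ⋂ i, A i).Nonempty :=
    IsCompact.inter_iInter_nonempty isCompact_univ A hAclosed hfin
  set X₀ : Set (G → Bool) := ⋂ i, A i with hX₀
  have hX₀ne' : X₀.Nonempty := by
    obtain ⟨x, _, hx⟩ := hX₀ne
    exact ⟨x, hx⟩
  have hX₀closed : IsClosed X₀ := isClosed_iInter hAclosed
  have hX₀inv : ∀ g : G, ∀ x ∈ X₀, shiftB g x ∈ X₀ := by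
    intro g x hx
    rw [hX₀, Set.mem_iInter] at hx ⊢
    rintro ⟨σ, k⟩
    obtain ⟨t, ht, hne⟩ := hx ⟨σ, g⁻¹ * k⟩
    refine ⟨t, ht, ?_⟩
    simpa [shiftB, mul_assoc] using hne
  have hX₀free : ∀ x ∈ X₀, ∀ g : G, g ≠ 1 → shiftB g x ≠ x := by
    intro x hx g hg
    rw [hX₀, Set.mem_iInter] at hx
    obtain ⟨t, ht, hne⟩ := hx ⟨⟨g⁻¹, inv_ne_one.mpr hg⟩, 1⟩
    intro heq
    apply hne
    simp only [one_mul] at *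
    have := congrFun heq t
    simp only [shiftB] at this
    rw [← this]
  -- Zorn's lemma for a minimal subsystem
  set 𝒮 : Set (Set (G → Bool)) :=
    {Y | Y.Nonempty ∧ IsClosed Y ∧ (∀ g : G, ∀ y ∈ Y, shiftB g y ∈ Y) ∧ Y ⊆ X₀} with h𝒮
  have hX₀mem : X₀ ∈ 𝒮 := ⟨hX₀ne', hX₀closed, hX₀inv, subset_rfl⟩
  have hchainlb : ∀ c ⊆ 𝒮, IsChain (· ⊆ ·) c → c.Nonempty →
      ∃ lb ∈ 𝒮, ∀ s ∈ c, lb ⊆ s := by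
    intro c hc hchain hcne
    refine ⟨⋂₀ c, ?_, fun Y hY => Set.sInter_subset_of_mem hY⟩
    have hne : (⋂₀ c).Nonempty := by
      rw [Set.sInter_eq_iInter]
      haveI : Nonempty c := hcne.to_subtype
      apply IsCompact.nonempty_iInter_of_directed_nonempty_isCompact_isClosed
      · intro Y Z
        rcases hchain.total Y.2 Z.2 with h | h
        · exact ⟨Y, subset_rfl, h⟩
        · exact ⟨Z, h, subset_rfl⟩
      · exact fun Y => (hc Y.2).1
      · exact fun Y => ((hc Y.2).2.1).isCompact
      · exact fun Y => (hc Y.2).2.1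
    refine ⟨hne, isClosed_sInter (fun Y hY => (hc hY).2.1), ?_, ?_⟩
    · intro g y hy
      rw [Set.mem_sInter] at hy ⊢
      exact fun Y hY => (hc hY).2.2.1 g y (hy Y hY)
    · obtain ⟨Y₀, hY₀⟩ := hcne
      exact (Set.sInter_subset_of_mem hY₀).trans (hc hY₀).2.2.2
  obtain ⟨m, hmsub, hmin⟩ := zorn_superset_nonempty 𝒮 hchainlb X₀ hX₀mem
  obtain ⟨⟨hmne, hmclosed, hminv, hmX₀⟩, hminimal⟩ := hmin
  refine ⟨m, hmne, hmclosed, hminv, ?_, fun x hx => hX₀free x (hmX₀ hx)⟩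
  -- minimality: every orbit is dense
  intro x hx
  set Y : Set (G → Bool) := closure (Set.range fun g : G => shiftB g x) with hY
  have hYsubm : Y ⊆ m := by
    apply closure_minimal _ hmclosed
    rintro _ ⟨g, rfl⟩
    exact hminv g x hx
  have hYmem : Y ∈ 𝒮 := by
    refine ⟨⟨x, ?_⟩, isClosed_closure, ?_, hYsubm.trans hmX₀⟩
    · apply subset_closure
      exact ⟨1, MFS.shiftB_one x⟩
    · intro g y hy
      have h1 : shiftB g '' Y ⊆ closure (shiftB g '' Set.range fun g' : G => shiftB g' x) :=
        image_closure_subset_closure_image (MFS.continuous_shiftB g)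
      have h2 : (shiftB g '' Set.range fun g' : G => shiftB g' x)
          ⊆ Set.range fun g' : G => shiftB g' x := by
        rintro _ ⟨_, ⟨g', rfl⟩, rfl⟩
        exact ⟨g * g', (MFS.shiftB_mul g g' x).symm⟩
      exact (h1.trans (closure_mono h2)) (Set.mem_image_of_mem _ hy)
  exact hminimal hYmem hYsubm
end

section
/- There exists a natural number C ≥ 1 such that for every n ≥ 1 and every k with 1 ≤ k ≤ n, one has 2^{−Ck} ≤ 2^{−Ck/2} · ∏_{l=1}^n (1 − 2^{−Cl/2})^{4C²·l·k}. -/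
open Finset

/-- Weierstrass product inequality. -/
lemma weierstrass_prod (s : Finset ℕ) (f : ℕ → ℝ) (h0 : ∀ i ∈ s, 0 ≤ f i)
    (h1 : ∀ i ∈ s, f i ≤ 1) :
    1 - ∑ i ∈ s, f i ≤ ∏ i ∈ s, (1 - f i) := by
  classical
  induction s using Finset.induction_on with
  | empty => simp
  | @insert a s ha ih =>
    rw [Finset.sum_insert ha, Finset.prod_insert ha]
    have h0a := h0 a (Finset.mem_insert_self a s)
    have h1a := h1 a (Finset.mem_insert_self a s)
    have ih' := ih (fun i hi => h0 i (Finset.mem_insert_of_mem hi))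
      (fun i hi => h1 i (Finset.mem_insert_of_mem hi))
    have hsum : 0 ≤ ∑ i ∈ s, f i :=
      Finset.sum_nonneg fun i hi => h0 i (Finset.mem_insert_of_mem hi)
    nlinarith [ih', h0a, h1a, hsum]

lemma geom_half_sum (n : ℕ) : ∑ l ∈ Finset.Icc 1 n, ((2:ℝ)^l)⁻¹ = 1 - ((2:ℝ)^n)⁻¹ := by
  induction n with
  | zero => simp
  | succ n ih =>
    rw [Finset.sum_Icc_succ_top (by omega : 1 ≤ n + 1), ih]
    have h2 : (2:ℝ)^n ≠ 0 := by positivity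
    field_simp
    ring

lemma pow_dominates (l : ℕ) (hl : 1 ≤ l) : (512 : ℝ) * l ≤ 2 ^ (15 * l) := by
  have h1 : (l:ℝ) ≤ 2 ^ l := by exact_mod_cast Nat.le_of_lt (Nat.lt_two_pow_self (n := l))
  have h2 : (512:ℝ) * 2 ^ l ≤ 2 ^ (15 * l) := by
    have h9 : (512:ℝ) = 2 ^ 9 := by norm_num
    rw [h9, ← pow_add]
    exact pow_le_pow_right₀ (by norm_num) (by omega)
  nlinarith [pow_pos (by norm_num : (0:ℝ) < 2) l]

lemma term_small (l : ℕ) (hl : 1 ≤ l) :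
    (256:ℝ) * l * ((2:ℝ) ^ (16 * l))⁻¹ ≤ ((2:ℝ)^l)⁻¹ / 2 := by
  have hd := pow_dominates l hl
  have hpos : (0:ℝ) < 2 ^ (16 * l) := by positivity
  have hpos2 : (0:ℝ) < 2 ^ l := by positivity
  have hsplit : (2:ℝ) ^ (16 * l) = 2 ^ (15 * l) * 2 ^ l := by
    rw [← pow_add]; congr 1; omega
  rw [← div_eq_mul_inv, inv_eq_one_div, div_div, div_le_div_iff₀ hpos (by positivity)]
  rw [hsplit]
  nlinarith [hd, hpos2, pow_pos (by norm_num : (0:ℝ) < 2) (15 * l)]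

lemma term_nonneg (l : ℕ) : (0:ℝ) ≤ (256:ℝ) * l * ((2:ℝ) ^ (16 * l))⁻¹ := by positivity

lemma base_prod_ge_half (n : ℕ) :
    (1:ℝ)/2 ≤ ∏ l ∈ Finset.Icc 1 n, (1 - ((2:ℝ) ^ (16 * l))⁻¹) ^ (256 * l) := by
  set f : ℕ → ℝ := fun l => (256:ℝ) * l * ((2:ℝ) ^ (16 * l))⁻¹ with hf
  have hfle : ∀ l ∈ Finset.Icc 1 n, f l ≤ ((2:ℝ)^l)⁻¹ / 2 := by
    intro l hl
    rw [Finset.mem_Icc] at hl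
    exact term_small l hl.1
  have hfle1 : ∀ l ∈ Finset.Icc 1 n, f l ≤ 1 := by
    intro l hl
    have h := hfle l hl
    have : ((2:ℝ)^l)⁻¹ ≤ 1 := by
      rw [inv_le_one_iff₀]
      right; exact one_le_pow₀ (by norm_num)
    linarith
  have hf0 : ∀ l ∈ Finset.Icc 1 n, 0 ≤ f l := fun l _ => term_nonneg l
  have hsum : ∑ l ∈ Finset.Icc 1 n, f l ≤ 1/2 := by
    calc ∑ l ∈ Finset.Icc 1 n, f l ≤ ∑ l ∈ Finset.Icc 1 n, ((2:ℝ)^l)⁻¹ / 2 :=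
          Finset.sum_le_sum hfle
      _ = (∑ l ∈ Finset.Icc 1 n, ((2:ℝ)^l)⁻¹) / 2 := by rw [Finset.sum_div]
      _ = (1 - ((2:ℝ)^n)⁻¹) / 2 := by rw [geom_half_sum]
      _ ≤ 1/2 := by
          have : (0:ℝ) ≤ ((2:ℝ)^n)⁻¹ := by positivity
          linarith
  have hW := weierstrass_prod (Finset.Icc 1 n) f hf0 hfle1
  have hstep : ∏ l ∈ Finset.Icc 1 n, (1 - f l) ≤
      ∏ l ∈ Finset.Icc 1 n, (1 - ((2:ℝ) ^ (16 * l))⁻¹) ^ (256 * l) := by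
    apply Finset.prod_le_prod
    · intro l hl
      have := hfle1 l hl
      linarith
    · intro l hl
      have hx1 : ((2:ℝ) ^ (16 * l))⁻¹ ≤ 1 := by
        rw [inv_le_one_iff₀]
        right; exact one_le_pow₀ (by norm_num)
      have h := one_add_mul_le_pow (a := -((2:ℝ) ^ (16 * l))⁻¹) (by linarith) (256 * l)
      calc 1 - f l = 1 + (256 * l : ℕ) * (-((2:ℝ) ^ (16 * l))⁻¹) := by
            rw [hf]; push_cast; ring
        _ ≤ (1 + -((2:ℝ) ^ (16 * l))⁻¹) ^ (256 * l) := h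
        _ = (1 - ((2:ℝ) ^ (16 * l))⁻¹) ^ (256 * l) := by ring_nf
  linarith

/-- There is a natural number `C ≥ 1` such that for all `n ≥ 1` and `1 ≤ k ≤ n`,
`2^(-Ck) ≤ 2^(-Ck/2) · ∏_{l=1}^n (1 - 2^(-Cl/2))^(4C²lk)`. -/
theorem lll_inequality_free_subshift :
    ∃ C : ℕ, 1 ≤ C ∧ ∀ n : ℕ, 1 ≤ n → ∀ k : ℕ, 1 ≤ k → k ≤ n →
      ((2 : ℝ) ^ (C * k))⁻¹ ≤
        ((2 : ℝ) ^ (((C : ℝ) * k) / 2))⁻¹ *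
          ∏ l ∈ Finset.Icc 1 n,
            (1 - ((2 : ℝ) ^ (((C : ℝ) * l) / 2))⁻¹) ^ (4 * C ^ 2 * l * k) := by
  refine ⟨32, by norm_num, fun n hn k hk hkn => ?_⟩
  have hr : ∀ m : ℕ, ((2:ℝ) ^ ((((32:ℕ):ℝ) * m) / 2)) = (2:ℝ) ^ (16 * m) := by
    intro m
    have h : (((32:ℕ):ℝ) * m) / 2 = ((16 * m : ℕ) : ℝ) := by push_cast; ring
    rw [h, Real.rpow_natCast]
  rw [hr]
  have hprod : ∀ l : ℕ, (1 - ((2 : ℝ) ^ ((((32:ℕ):ℝ) * l) / 2))⁻¹) ^ (4 * 32 ^ 2 * l * k)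
      = ((1 - ((2:ℝ) ^ (16 * l))⁻¹) ^ (256 * l)) ^ (16 * k) := by
    intro l
    rw [hr, ← pow_mul]
    congr 1
    ring
  simp only [hprod]
  rw [Finset.prod_pow]
  have hbase := base_prod_ge_half n
  have hP0 : (0:ℝ) ≤ ∏ l ∈ Finset.Icc 1 n, (1 - ((2:ℝ) ^ (16 * l))⁻¹) ^ (256 * l) := by
    linarith
  have hpow : ((1:ℝ)/2) ^ (16 * k) ≤
      (∏ l ∈ Finset.Icc 1 n, (1 - ((2:ℝ) ^ (16 * l))⁻¹) ^ (256 * l)) ^ (16 * k) :=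
    pow_le_pow_left₀ (by norm_num) hbase _
  have hhalf : ((1:ℝ)/2) ^ (16 * k) = ((2:ℝ) ^ (16 * k))⁻¹ := by
    rw [div_pow, one_pow, one_div]
  have hfin : ((2:ℝ) ^ (16 * k))⁻¹ * ((2:ℝ) ^ (16 * k))⁻¹ = ((2:ℝ) ^ (32 * k : ℕ))⁻¹ := by
    rw [← mul_inv, ← pow_add]
    congr 1
    ring
  have h2pos : (0:ℝ) < ((2:ℝ) ^ (16 * k))⁻¹ := by positivity
  calc ((2:ℝ) ^ (32 * k))⁻¹ = ((2:ℝ) ^ (16 * k))⁻¹ * ((2:ℝ) ^ (16 * k))⁻¹ := hfin.symm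
    _ ≤ ((2:ℝ) ^ (16 * k))⁻¹ *
        (∏ l ∈ Finset.Icc 1 n, (1 - ((2:ℝ) ^ (16 * l))⁻¹) ^ (256 * l)) ^ (16 * k) := by
        apply mul_le_mul_of_nonneg_left _ (le_of_lt h2pos)
        rw [← hhalf]
        exact hpow
end

section
/- Let G be a countable discrete group acting minimally by homeomorphisms on a compact metrizable space X, let φ : X → {0,1}^G be the stabilizer map, let X₀ ⊆ X be the set of continuity points of φ, assume X₀ is nonempty and dense, let Z be the closure of {φ(x) : x ∈ X₀} in {0,1}^G (with the conjugation action of G), and let X̃ be the closure of {(x, φ(x)) : x ∈ X₀} in X × {0,1}^G (with the diagonal G-action). Then both X̃ and Z are minimal G-systems, i.e. every G-orbit in X̃ is dense in X̃ and every G-orbit in Z is dense in Z. -/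
open Filter Topology

/-- The conjugation action of `G` on `{0,1}^G`: `(g·ω)(h) = ω(g⁻¹hg)`, corresponding to
`H ↦ gHg⁻¹` on characteristic functions of subgroups. -/
def conjChar {G : Type*} [Group G] (g : G) (ω : G → Bool) : G → Bool :=
  fun h => ω (g⁻¹ * h * g)

lemma conjChar_continuous {G : Type*} [Group G] (g : G) :
    Continuous (conjChar g : (G → Bool) → (G → Bool)) :=
  continuous_pi fun h => continuous_apply (g⁻¹ * h * g)

lemma conjChar_one {G : Type*} [Group G] (ω : G → Bool) : conjChar 1 ω = ω := by
  funext h; simp [conjChar]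

lemma conjChar_mul {G : Type*} [Group G] (g g' : G) (ω : G → Bool) :
    conjChar g (conjChar g' ω) = conjChar (g * g') ω := by
  funext h; simp [conjChar, mul_assoc]

/-- Let a countable discrete group `G` act minimally by homeomorphisms on a compact
metrizable space `X`, let `φ` be the stabilizer map, `X₀` its (nonempty, dense) set of
continuity points, `Z` the closure of `φ(X₀)` in `{0,1}^G` (conjugation action), and `X̃`
the closure of the graph of `φ` over `X₀` in `X × {0,1}^G` (diagonal action).  Then both
`X̃` and `Z` are minimal `G`-systems: every orbit is dense. -/
theorem tilde_and_Z_minimal {G X : Type*} [Group G] [Countable G]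
    [TopologicalSpace X] [CompactSpace X] [TopologicalSpace.MetrizableSpace X]
    [MulAction G X] [ContinuousConstSMul G X]
    (hmin : ∀ x : X, Dense (Set.range fun g : G => g • x))
    (φ : X → G → Bool) (hφ : ∀ (x : X) (g : G), φ x g = true ↔ g • x = x)
    (X₀ : Set X) (hX₀ : X₀ = {x : X | ContinuousAt φ x})
    (hne : X₀.Nonempty) (hdense : Dense X₀)
    (Z : Set (G → Bool)) (hZ : Z = closure (φ '' X₀))
    (Xt : Set (X × (G → Bool))) (hXt : Xt = closure ((fun x => (x, φ x)) '' X₀)) :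
    (∀ p ∈ Xt, Xt ⊆ closure (Set.range fun g : G => (g • p.1, conjChar g p.2))) ∧
    (∀ ω ∈ Z, Z ⊆ closure (Set.range fun g : G => conjChar g ω)) := by
  set S : Set (X × (G → Bool)) := (fun x => (x, φ x)) '' X₀ with hS
  -- equivariance of the stabilizer map
  have hequiv : ∀ (g : G) (x : X), φ (g • x) = conjChar g (φ x) := by
    intro g x; funext h
    have key : h • (g • x) = g • x ↔ (g⁻¹ * h * g) • x = x := by
      rw [show (g⁻¹ * h * g) • x = g⁻¹ • (h • (g • x)) by
        rw [smul_smul, smul_smul, mul_assoc]]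
      constructor
      · intro hh; rw [hh, inv_smul_smul]
      · intro hh
        have := congrArg (fun y => g • y) hh
        simpa [smul_inv_smul] using this
    have hiff : φ (g • x) h = true ↔ φ x (g⁻¹ * h * g) = true :=
      (hφ (g • x) h).trans (key.trans (hφ x (g⁻¹ * h * g)).symm)
    show φ (g • x) h = φ x (g⁻¹ * h * g)
    cases hb : φ x (g⁻¹ * h * g) with
    | true => exact hiff.mpr hb
    | false =>
      cases ha : φ (g • x) h with
      | true => rw [hb] at hiff; simpa using hiff.mp ha
      | false => rfl
  -- X₀ is invariant
  have hX₀inv : ∀ (g : G) (x : X), x ∈ X₀ → g • x ∈ X₀ := by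
    intro g x hx
    rw [hX₀] at hx ⊢
    replace hx : ContinuousAt φ x := hx
    have hfun : (fun y : X => conjChar g (φ (g⁻¹ • y))) = φ := by
      funext y; rw [← hequiv, smul_inv_smul]
    have hc : ContinuousAt (fun y : X => conjChar g (φ (g⁻¹ • y))) (g • x) := by
      apply (conjChar_continuous g).continuousAt.comp
      apply ContinuousAt.comp ?_ (continuous_const_smul g⁻¹).continuousAt
      simpa [inv_smul_smul] using hx
    rwa [hfun] at hc
  -- rigidity: over a continuity point, the fiber of Xt is a single point
  have hrigid : ∀ (x : X) (ω : G → Bool), (x, ω) ∈ Xt → x ∈ X₀ → ω = φ x := by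
    intro x ω hm hx
    rw [hX₀] at hx
    replace hx : ContinuousAt φ x := hx
    rw [hXt] at hm
    have hF : (𝓝 (x, ω) ⊓ 𝓟 S).NeBot := mem_closure_iff_clusterPt.mp hm
    set F := 𝓝 (x, ω) ⊓ 𝓟 S with hFdef
    have hfst : Tendsto (Prod.fst : X × (G → Bool) → X) F (𝓝 x) :=
      (continuous_fst.tendsto (x, ω)).mono_left inf_le_left
    have h1 : Tendsto (fun p : X × (G → Bool) => φ p.1) F (𝓝 (φ x)) := Filter.Tendsto.comp hx hfst
    have hSF : S ∈ F := mem_inf_of_right (mem_principal_self S)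
    have heq : (fun p : X × (G → Bool) => φ p.1) =ᶠ[F] Prod.snd := by
      refine eventually_of_mem hSF ?_
      rintro _ ⟨y, hy, rfl⟩; rfl
    have hsnd : Tendsto (Prod.snd : X × (G → Bool) → G → Bool) F (𝓝 ω) :=
      (continuous_snd.tendsto (x, ω)).mono_left inf_le_left
    have h2 : Tendsto (fun p : X × (G → Bool) => φ p.1) F (𝓝 ω) := by
      rwa [Tendsto, Filter.map_congr heq]
    have : (𝓝 ω ⊓ 𝓝 (φ x)).NeBot :=
      Filter.neBot_of_le (f := Filter.map (fun p : X × (G → Bool) => φ p.1) F)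
        (le_inf h2 h1)
    exact eq_of_nhds_neBot this
  -- continuity and invariance of the diagonal maps
  have hTcont : ∀ g : G, Continuous (fun p : X × (G → Bool) => (g • p.1, conjChar g p.2)) :=
    fun g => ((continuous_const_smul g).comp continuous_fst).prodMk
      ((conjChar_continuous g).comp continuous_snd)
  have hSmaps : ∀ g : G, (fun p : X × (G → Bool) => (g • p.1, conjChar g p.2)) '' S ⊆ S := by
    rintro g _ ⟨_, ⟨y, hy, rfl⟩, rfl⟩
    exact ⟨g • y, hX₀inv g y hy, by simp [hequiv]⟩
  have hXtInv : ∀ g : G, ∀ p ∈ Xt, (g • p.1, conjChar g p.2) ∈ Xt := by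
    intro g p hp
    rw [hXt] at hp ⊢
    exact closure_mono (hSmaps g)
      (image_closure_subset_closure_image (hTcont g) ⟨p, hp, rfl⟩)
  have hXtC : IsCompact Xt := by rw [hXt]; exact isClosed_closure.isCompact
  -- main lemma: every nonempty closed invariant subset of Xt contains Xt
  have main : ∀ Y : Set (X × (G → Bool)), Y ⊆ Xt → IsClosed Y → Y.Nonempty →
      (∀ g : G, ∀ p ∈ Y, (g • p.1, conjChar g p.2) ∈ Y) → Xt ⊆ Y := by
    intro Y hYXt hYcl hYne hYinv
    have hYcomp : IsCompact Y := hYcl.isCompact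
    obtain ⟨p, hp⟩ := hYne
    have hπ : Prod.fst '' Y = Set.univ := by
      have hcl : IsClosed (Prod.fst '' Y) := (hYcomp.image continuous_fst).isClosed
      have horb : (Set.range fun g : G => g • p.1) ⊆ Prod.fst '' Y := by
        rintro _ ⟨g, rfl⟩; exact ⟨(g • p.1, conjChar g p.2), hYinv g p hp, rfl⟩
      apply Set.eq_univ_of_univ_subset
      calc (Set.univ : Set X) = closure (Set.range fun g : G => g • p.1) :=
            ((hmin p.1).closure_eq).symm
        _ ⊆ closure (Prod.fst '' Y) := closure_mono horb
        _ = Prod.fst '' Y := hcl.closure_eq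
    have hSY : S ⊆ Y := by
      rintro _ ⟨x, hx, rfl⟩
      have hxmem : x ∈ Prod.fst '' Y := hπ ▸ Set.mem_univ x
      obtain ⟨q, hq, hq1⟩ := hxmem
      have hω : q.2 = φ x := by
        have := hrigid q.1 q.2 (hYXt hq) (hq1 ▸ hx)
        rw [this, hq1]
      have hqeq : q = (x, φ x) := Prod.ext hq1 hω
      show (x, φ x) ∈ Y
      exact hqeq ▸ hq
    rw [hXt]; exact closure_minimal hSY hYcl
  have part1 : ∀ p ∈ Xt, Xt ⊆ closure (Set.range fun g : G => (g • p.1, conjChar g p.2)) := by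
    intro p hp
    set O : Set (X × (G → Bool)) := Set.range fun g : G => (g • p.1, conjChar g p.2) with hO
    have hOXt : O ⊆ Xt := by rintro _ ⟨g, rfl⟩; exact hXtInv g p hp
    refine main (closure O)
      (closure_minimal hOXt (by rw [hXt]; exact isClosed_closure)) isClosed_closure
      ⟨p, subset_closure ⟨1, by simp [conjChar_one]⟩⟩ ?_
    intro g q hq
    have h1 : (fun q : X × (G → Bool) => (g • q.1, conjChar g q.2)) '' O ⊆ O := by
      rintro _ ⟨_, ⟨h, rfl⟩, rfl⟩
      exact ⟨g * h, by simp [mul_smul, conjChar_mul]⟩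
    exact closure_mono h1 (image_closure_subset_closure_image (hTcont g) ⟨q, hq, rfl⟩)
  refine ⟨part1, ?_⟩
  -- Z is the image of Xt under the second projection
  have hZXt : Z = Prod.snd '' Xt := by
    apply subset_antisymm
    · rw [hZ]
      apply closure_minimal ?_ (hXtC.image continuous_snd).isClosed
      rintro _ ⟨x, hx, rfl⟩
      exact ⟨(x, φ x), by rw [hXt]; exact subset_closure ⟨x, hx, rfl⟩, rfl⟩
    · rw [hZ, hXt]
      intro q hq
      obtain ⟨p, hp, rfl⟩ := hq
      have h1 := image_closure_subset_closure_image (f := Prod.snd) continuous_snd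
        (s := S) ⟨p, hp, rfl⟩
      have him : Prod.snd '' S = φ '' X₀ := by
        rw [hS, Set.image_image]
      rwa [him] at h1
  intro ω hω
  rw [hZXt] at hω
  obtain ⟨p, hp, hp2⟩ := hω
  intro ζ hζ
  rw [hZXt] at hζ
  obtain ⟨q, hq, rfl⟩ := hζ
  have h1 := part1 p hp hq
  have h2 := image_closure_subset_closure_image (f := Prod.snd) continuous_snd ⟨q, h1, rfl⟩
  refine closure_mono ?_ h2
  rintro _ ⟨_, ⟨g, rfl⟩, rfl⟩
  exact ⟨g, by rw [hp2]⟩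
end

section
/- Let G be a countable discrete group acting minimally by homeomorphisms on a compact metrizable space X, let φ : X → {0,1}^G be the stabilizer map, and let x₀ ∈ X be a continuity point of φ. Then for every x ∈ X, the point (x₀, φ(x₀)) lies in the closure of the G-orbit of (x, φ(x)) in X × {0,1}^G (under the diagonal action). Consequently, the closure X̃ of {(x, φ(x)) : x a continuity point of φ} is the unique minimal subset of the closure of {(x, φ(x)) : x ∈ X}, and its projection Z to {0,1}^G is the unique minimal subset of the closure of {φ(x) : x ∈ X}. -/
/-- A minimal subset of a `G`-space (with action `act`): a nonempty closed invariant set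
containing no proper nonempty closed invariant subset. -/
def IsMinimalClosedInvariant {G α : Type*} [TopologicalSpace α]
    (act : G → α → α) (M : Set α) : Prop :=
  M.Nonempty ∧ IsClosed M ∧ (∀ g : G, ∀ x ∈ M, act g x ∈ M) ∧
    ∀ M' : Set α, M' ⊆ M → M'.Nonempty → IsClosed M' →
      (∀ g : G, ∀ x ∈ M', act g x ∈ M') → M' = M

/-- Let a countable discrete group `G` act minimally by homeomorphisms on a compact
metrizable space `X`, let `φ` be the stabilizer map and `x₀` a continuity point of `φ`.
Then for every `x ∈ X` the point `(x₀, φ x₀)` lies in the closure of the (diagonal)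
`G`-orbit of `(x, φ x)`.  Consequently `X̃`, the closure of the graph of `φ` over the
continuity points, is the unique minimal subset of the closure of `{(x, φ x) : x ∈ X}`,
and its projection `Z` is the unique minimal subset of the closure of `{φ x : x ∈ X}`. -/
theorem unique_minimal_subset_of_graph_closure {G X : Type*} [Group G] [Countable G]
    [TopologicalSpace X] [CompactSpace X] [TopologicalSpace.MetrizableSpace X]
    [MulAction G X] [ContinuousConstSMul G X]
    (hmin : ∀ x : X, Dense (Set.range fun g : G => g • x))
    (φ : X → G → Bool) (hφ : ∀ (x : X) (g : G), φ x g = true ↔ g • x = x)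
    (x₀ : X) (hx₀ : ContinuousAt φ x₀)
    (Xt : Set (X × (G → Bool)))
    (hXt : Xt = closure ((fun x => (x, φ x)) '' {x : X | ContinuousAt φ x}))
    (Z : Set (G → Bool)) (hZ : Z = closure (φ '' {x : X | ContinuousAt φ x})) :
    (∀ x : X, (x₀, φ x₀) ∈ closure (Set.range fun g : G => (g • x, conjChar g (φ x)))) ∧
    (Xt ⊆ closure (Set.range fun x : X => (x, φ x)) ∧
      IsMinimalClosedInvariant
        (fun (g : G) (p : X × (G → Bool)) => (g • p.1, conjChar g p.2)) Xt ∧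
      ∀ M : Set (X × (G → Bool)), M ⊆ closure (Set.range fun x : X => (x, φ x)) →
        IsMinimalClosedInvariant
          (fun (g : G) (p : X × (G → Bool)) => (g • p.1, conjChar g p.2)) M → M = Xt) ∧
    (Z ⊆ closure (Set.range fun x : X => φ x) ∧
      IsMinimalClosedInvariant (fun (g : G) (ω : G → Bool) => conjChar g ω) Z ∧
      ∀ M : Set (G → Bool), M ⊆ closure (Set.range fun x : X => φ x) →
        IsMinimalClosedInvariant (fun (g : G) (ω : G → Bool) => conjChar g ω) M → M = Z) := by
  subst hXt hZ
  set C : Set X := {x : X | ContinuousAt φ x} with hC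
  set f : X → X × (G → Bool) := fun x => (x, φ x) with hf
  set T : G → (X × (G → Bool)) → (X × (G → Bool)) :=
    fun g p => (g • p.1, conjChar g p.2) with hT
  -- basic facts
  have hconj : ∀ (g : G) (x : X), conjChar g (φ x) = φ (g • x) := by
    intro g x; funext h
    rw [Bool.eq_iff_iff]
    show φ x (g⁻¹ * h * g) = true ↔ φ (g • x) h = true
    rw [hφ, hφ]
    constructor
    · intro H
      rw [smul_smul, show h * g = g * (g⁻¹ * h * g) by group, mul_smul, H]
    · intro H
      rw [mul_smul, mul_smul, H, inv_smul_smul]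
  have hconjCont : ∀ g : G, Continuous (fun ω : G → Bool => conjChar g ω) :=
    fun g => continuous_pi fun h => continuous_apply (g⁻¹ * h * g)
  have hTcont : ∀ g : G, Continuous (T g) := fun g =>
    ((continuous_const_smul g).comp continuous_fst).prodMk
      ((hconjCont g).comp continuous_snd)
  have hTf : ∀ (g : G) (x : X), T g (f x) = f (g • x) := by
    intro g x
    show (g • x, conjChar g (φ x)) = (g • x, φ (g • x))
    rw [hconj]
  have hfCont : ∀ x ∈ C, ContinuousAt f x := fun x hx => continuousAt_id.prodMk hx
  have hCinv : ∀ (g : G), ∀ x ∈ C, g • x ∈ C := by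
    intro g x hx
    have c1 : ContinuousAt (fun y : X => g⁻¹ • y) (g • x) :=
      (continuous_const_smul g⁻¹).continuousAt
    have c2 : ContinuousAt φ ((fun y : X => g⁻¹ • y) (g • x)) := by
      show ContinuousAt φ (g⁻¹ • g • x); rwa [inv_smul_smul]
    have c3 : ContinuousAt (fun y : X => conjChar g (φ (g⁻¹ • y))) (g • x) :=
      ((hconjCont g).continuousAt).comp (c2.comp c1)
    have he : (fun y : X => conjChar g (φ (g⁻¹ • y))) = φ := by
      funext y; rw [hconj, smul_inv_smul]
    rwa [he] at c3
  -- invariance of closure (range f)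
  have hRinv : ∀ (g : G), ∀ p ∈ closure (Set.range f), T g p ∈ closure (Set.range f) := by
    intro g p hp
    have h1 : T g '' closure (Set.range f) ⊆ closure (T g '' Set.range f) :=
      image_closure_subset_closure_image (hTcont g)
    have h2 : T g '' Set.range f ⊆ Set.range f := by
      rintro _ ⟨_, ⟨y, rfl⟩, rfl⟩; exact ⟨g • y, (hTf g y).symm⟩
    exact closure_mono h2 (h1 ⟨p, hp, rfl⟩)
  -- KEY: every point of the closure of the graph has (x₀, φ x₀) in its orbit closure
  have key : ∀ p ∈ closure (Set.range f),
      (x₀, φ x₀) ∈ closure (Set.range fun g : G => T g p) := by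
    intro p hp
    rw [mem_closure_iff_nhds]
    intro N hN
    obtain ⟨W, hWn, hWc, hWN⟩ := exists_mem_nhds_isClosed_subset hN
    have hfx : ContinuousAt f x₀ := continuousAt_id.prodMk hx₀
    have hV : f ⁻¹' W ∈ nhds x₀ := hfx.preimage_mem_nhds hWn
    obtain ⟨V, hVsub, hVo, hxV⟩ := mem_nhds_iff.mp hV
    obtain ⟨_, ⟨g, rfl⟩, hg⟩ := (hmin p.1).exists_mem_open hVo ⟨x₀, hxV⟩
    have hq : T g p ∈ closure (Set.range f) := hRinv g p hp
    have hq2 : T g p ∈ V ×ˢ (Set.univ : Set (G → Bool)) := ⟨hg, trivial⟩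
    have h3 : T g p ∈ closure ((V ×ˢ (Set.univ : Set (G → Bool))) ∩ Set.range f) :=
      (hVo.prod isOpen_univ).inter_closure ⟨hq2, hq⟩
    have h4 : (V ×ˢ (Set.univ : Set (G → Bool))) ∩ Set.range f ⊆ W := by
      rintro _ ⟨⟨hy1, -⟩, ⟨y, rfl⟩⟩
      exact hVsub hy1
    have h5 : T g p ∈ W := hWc.closure_subset (closure_mono h4 h3)
    exact ⟨T g p, hWN h5, ⟨g, rfl⟩⟩
  -- graph over C is in the closure of the orbit of any point of the graph over C
  have hCorb : ∀ y₀ ∈ C, f '' C ⊆ closure (Set.range fun g : G => f (g • y₀)) := by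
    intro y₀ _
    rintro _ ⟨y, hy, rfl⟩
    have h1 : y ∈ closure (Set.range fun g : G => g • y₀) := (hmin y₀) y
    have h2 := ((hfCont y hy).continuousWithinAt).mem_closure_image h1
    have h3 : f '' (Set.range fun g : G => g • y₀) = Set.range fun g : G => f (g • y₀) := by
      rw [← Set.range_comp]; rfl
    rwa [h3] at h2
  have hCorbZ : ∀ y₀ ∈ C, φ '' C ⊆ closure (Set.range fun g : G => φ (g • y₀)) := by
    intro y₀ _
    rintro _ ⟨y, hy, rfl⟩
    have h1 : y ∈ closure (Set.range fun g : G => g • y₀) := (hmin y₀) y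
    have h2 := (hy.continuousWithinAt).mem_closure_image h1
    have h3 : φ '' (Set.range fun g : G => g • y₀) = Set.range fun g : G => φ (g • y₀) := by
      rw [← Set.range_comp]; rfl
    rwa [h3] at h2
  -- lifting points of closure (range φ)
  have hcpt : IsCompact (closure (Set.range f)) := isClosed_closure.isCompact
  have hlift : ∀ ω ∈ closure (Set.range fun x : X => φ x),
      ∃ x : X, (x, ω) ∈ closure (Set.range f) := by
    intro ω hω
    have hsub : closure (Set.range fun x : X => φ x) ⊆ Prod.snd '' closure (Set.range f) := by
      apply closure_minimal
      · rintro _ ⟨x, rfl⟩; exact ⟨f x, subset_closure ⟨x, rfl⟩, rfl⟩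
      · exact (hcpt.image continuous_snd).isClosed
    obtain ⟨p, hp, hps⟩ := hsub hω
    refine ⟨p.1, ?_⟩
    rwa [show (p.1, ω) = p from Prod.ext rfl hps.symm]
  -- key for Z
  have keyZ : ∀ ω ∈ closure (Set.range fun x : X => φ x),
      φ x₀ ∈ closure (Set.range fun g : G => conjChar g ω) := by
    intro ω hω
    obtain ⟨x, hx⟩ := hlift ω hω
    have h1 := key (x, ω) hx
    have h2 : Prod.snd '' closure (Set.range fun g : G => T g (x, ω)) ⊆
        closure (Prod.snd '' Set.range fun g : G => T g (x, ω)) :=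
      image_closure_subset_closure_image continuous_snd
    have h3 : Prod.snd '' (Set.range fun g : G => T g (x, ω)) ⊆
        Set.range fun g : G => conjChar g ω := by
      rintro _ ⟨_, ⟨g, rfl⟩, rfl⟩; exact ⟨g, rfl⟩
    exact closure_mono h3 (h2 ⟨_, h1, rfl⟩)
  -- part 1
  have part1 : ∀ x : X, (x₀, φ x₀) ∈
      closure (Set.range fun g : G => (g • x, conjChar g (φ x))) := by
    intro x
    exact key (f x) (subset_closure ⟨x, rfl⟩)
  -- Xt basics
  have hXtsub : closure (f '' C) ⊆ closure (Set.range f) :=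
    closure_mono (by rintro _ ⟨y, -, rfl⟩; exact ⟨y, rfl⟩)
  have hXtInv : ∀ (g : G), ∀ p ∈ closure (f '' C), T g p ∈ closure (f '' C) := by
    intro g p hp
    have h1 : T g '' closure (f '' C) ⊆ closure (T g '' (f '' C)) :=
      image_closure_subset_closure_image (hTcont g)
    have h2 : T g '' (f '' C) ⊆ f '' C := by
      rintro _ ⟨_, ⟨y, hy, rfl⟩, rfl⟩
      exact ⟨g • y, hCinv g y hy, (hTf g y).symm⟩
    exact closure_mono h2 (h1 ⟨p, hp, rfl⟩)
  have hx₀C : x₀ ∈ C := hx₀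
  -- if (x₀, φ x₀) ∈ M' closed invariant, then closure (f '' C) ⊆ M'
  have hXtle : ∀ M' : Set (X × (G → Bool)), IsClosed M' →
      (∀ g : G, ∀ p ∈ M', T g p ∈ M') → (x₀, φ x₀) ∈ M' → closure (f '' C) ⊆ M' := by
    intro M' hcl hinv hmem
    have h1 : (Set.range fun g : G => f (g • x₀)) ⊆ M' := by
      rintro _ ⟨g, rfl⟩
      have := hinv g (f x₀) hmem
      rwa [hTf g x₀] at this
    exact closure_minimal ((hCorb x₀ hx₀C).trans (closure_minimal h1 hcl)) hcl
  have hZle : ∀ M' : Set (G → Bool), IsClosed M' →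
      (∀ g : G, ∀ ω ∈ M', conjChar g ω ∈ M') → φ x₀ ∈ M' → closure (φ '' C) ⊆ M' := by
    intro M' hcl hinv hmem
    have h1 : (Set.range fun g : G => φ (g • x₀)) ⊆ M' := by
      rintro _ ⟨g, rfl⟩
      have := hinv g (φ x₀) hmem
      rwa [hconj g x₀] at this
    exact closure_minimal ((hCorbZ x₀ hx₀C).trans (closure_minimal h1 hcl)) hcl
  have hZsub : closure (φ '' C) ⊆ closure (Set.range fun x : X => φ x) :=
    closure_mono (by rintro _ ⟨y, -, rfl⟩; exact ⟨y, rfl⟩)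
  have hZInv : ∀ (g : G), ∀ ω ∈ closure (φ '' C), conjChar g ω ∈ closure (φ '' C) := by
    intro g ω hω
    have h1 : (fun ω : G → Bool => conjChar g ω) '' closure (φ '' C) ⊆
        closure ((fun ω : G → Bool => conjChar g ω) '' (φ '' C)) :=
      image_closure_subset_closure_image (hconjCont g)
    have h2 : (fun ω : G → Bool => conjChar g ω) '' (φ '' C) ⊆ φ '' C := by
      rintro _ ⟨_, ⟨y, hy, rfl⟩, rfl⟩
      exact ⟨g • y, hCinv g y hy, (hconj g y).symm⟩
    exact closure_mono h2 (h1 ⟨ω, hω, rfl⟩)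
  refine ⟨part1, ⟨hXtsub, ⟨⟨f x₀, subset_closure ⟨x₀, hx₀C, rfl⟩⟩, isClosed_closure,
      hXtInv, ?_⟩, ?_⟩, hZsub, ⟨⟨φ x₀, subset_closure ⟨x₀, hx₀C, rfl⟩⟩, isClosed_closure,
      hZInv, ?_⟩, ?_⟩
  · -- minimality of Xt
    intro M' hsub hne hcl hinv
    obtain ⟨p, hp⟩ := hne
    have h0 : (x₀, φ x₀) ∈ M' := by
      have h1 : closure (Set.range fun g : G => T g p) ⊆ M' :=
        closure_minimal (by rintro _ ⟨g, rfl⟩; exact hinv g p hp) hcl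
      exact h1 (key p (hXtsub (hsub hp)))
    exact (hsub.antisymm (hXtle M' hcl hinv h0))
  · -- uniqueness for Xt
    intro M hMsub hM
    obtain ⟨⟨p, hp⟩, hMcl, hMinv, hMmin⟩ := hM
    have h0 : (x₀, φ x₀) ∈ M := by
      have h1 : closure (Set.range fun g : G => T g p) ⊆ M :=
        closure_minimal (by rintro _ ⟨g, rfl⟩; exact hMinv g p hp) hMcl
      exact h1 (key p (hMsub hp))
    exact (hMmin (closure (f '' C)) (hXtle M hMcl hMinv h0)
      ⟨f x₀, subset_closure ⟨x₀, hx₀C, rfl⟩⟩ isClosed_closure hXtInv).symm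
  · -- minimality of Z
    intro M' hsub hne hcl hinv
    obtain ⟨ω, hω⟩ := hne
    have h0 : φ x₀ ∈ M' := by
      have h1 : closure (Set.range fun g : G => conjChar g ω) ⊆ M' :=
        closure_minimal (by rintro _ ⟨g, rfl⟩; exact hinv g ω hω) hcl
      exact h1 (keyZ ω (hZsub (hsub hω)))
    exact (hsub.antisymm (hZle M' hcl hinv h0))
  · -- uniqueness for Z
    intro M hMsub hM
    obtain ⟨⟨ω, hω⟩, hMcl, hMinv, hMmin⟩ := hM
    have h0 : φ x₀ ∈ M := by
      have h1 : closure (Set.range fun g : G => conjChar g ω) ⊆ M :=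
        closure_minimal (by rintro _ ⟨g, rfl⟩; exact hMinv g ω hω) hMcl
      exact h1 (keyZ ω (hMsub hω))
    exact (hMmin (closure (φ '' C)) (hZle M hMcl hMinv h0)
      ⟨φ x₀, subset_closure ⟨x₀, hx₀C, rfl⟩⟩ isClosed_closure hZInv).symm
end
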